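/- For any smooth function h(y, ω̄, ω̄1, …, ω̄_{n−1}), the pair φ = h(y, ω̄, Ȳω̄, …, Ȳ^{n−1}ω̄), ψ = 0, where ω̄ = p̄1 − q, is a symmetry of the system p_{xy} = q_x, q_{xy} = 6 p_x^2 + y; i.e. it satisfies the defining equations D D̄ φ = D ψ and D D̄ ψ = 12 p1 D φ, where D is the total x-derivative. In particular D φ = 0. -/

import Mathlib

/-- Jet variables: `x`, `y`, `p1`, `q1`, and `pb i`, `qb i` with `pb 0 = p`, `qb 0 = q`,
`pb i = p̄_i`, `qb i = q̄_i` for `i ≥ 1`. -/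
inductive V : Type
  | x | y | p1 | q1
  | pb (i : ℕ) | qb (i : ℕ)
  deriving DecidableEq

/-- Partial derivative of `f` with respect to coordinate `i` at the point `z`. -/
noncomputable def pd {ι : Type*} [DecidableEq ι] (i : ι) (f : (ι → ℝ) → ℝ) (z : ι → ℝ) : ℝ :=
  deriv (fun t => f (Function.update z i t)) (z i)

/-- The total `y`-derivative `D̄ = Y` for the system `p_{xy} = q_x`, `q_{xy} = 6p1² + y`:
`Y = ∂/∂y + p̄1 ∂/∂p + q̄1 ∂/∂q + q1 ∂/∂p1 + (6p1²+y) ∂/∂q1 + Σ (p̄_{i+1} ∂/∂p̄_i + q̄_{i+1} ∂/∂q̄_i)`. -/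
noncomputable def Yop (f : (V → ℝ) → ℝ) (z : V → ℝ) : ℝ :=
  pd V.y f z + z V.q1 * pd V.p1 f z + (6 * (z V.p1) ^ 2 + z V.y) * pd V.q1 f z +
    ∑' i : ℕ, (z (V.pb (i + 1)) * pd (V.pb i) f z + z (V.qb (i + 1)) * pd (V.qb i) f z)

/-- The reduced characteristic field `∂/∂y + q1 ∂/∂p1 + (6p1²+y) ∂/∂q1`. -/
noncomputable def Yhat (g : (V → ℝ) → ℝ) (z : V → ℝ) : ℝ :=
  pd V.y g z + z V.q1 * pd V.p1 g z + (6 * (z V.p1) ^ 2 + z V.y) * pd V.q1 g z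

/-- `a k = D p̄_{k+1} = D̄^k q1` : `a 0 = q1`, `a (k+1) = Ŷ (a k)`. -/
noncomputable def a : ℕ → (V → ℝ) → ℝ
  | 0 => fun z => z V.q1
  | k + 1 => Yhat (a k)

/-- `b k = D q̄_{k+1} = D̄^k (6p1²+y)` : `b 0 = 6p1²+y`, `b (k+1) = Ŷ (b k)`. -/
noncomputable def b : ℕ → (V → ℝ) → ℝ
  | 0 => fun z => 6 * (z V.p1) ^ 2 + z V.y
  | k + 1 => Yhat (b k)

/-- The total `x`-derivative `D` on functions of `x, y, p, q, p̄_i, q̄_i`, using the equations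
`p_{xy} = q_x`, `q_{xy} = 6p1² + y` to express `D p̄_i`, `D q̄_i`. -/
noncomputable def Dop (f : (V → ℝ) → ℝ) (z : V → ℝ) : ℝ :=
  pd V.x f z + z V.p1 * pd (V.pb 0) f z + z V.q1 * pd (V.qb 0) f z +
    ∑' i : ℕ, (a i z * pd (V.pb (i + 1)) f z + b i z * pd (V.qb (i + 1)) f z)

/-- The `y`-integral `ω̄ = p̄1 − q`. -/
noncomputable def wb : (V → ℝ) → ℝ := fun z => z (V.pb 1) - z (V.qb 0)

lemma pd_const {ι : Type*} [DecidableEq ι] (i : ι) (c : ℝ) (z : ι → ℝ) :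
    pd i (fun _ => c) z = 0 := by
  simp [pd]

lemma pd_coord {ι : Type*} [DecidableEq ι] (i j : ι) (z : ι → ℝ) :
    pd i (fun z => z j) z = if j = i then 1 else 0 := by
  unfold pd
  simp only [Function.update_apply]
  split_ifs with hji
  · simp
  · simp

lemma pd_pair (i : V) (l k : ℕ) (z : V → ℝ) :
    pd i (fun z => z (V.pb l) - z (V.qb k)) z
      = (if V.pb l = i then 1 else 0) - (if V.qb k = i then 1 else 0) := by
  unfold pd
  simp only [Function.update_apply]
  split_ifs with h1 h2 h2
  · exact absurd (h1.trans h2.symm) (by simp)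
  · simp
  · rw [deriv_const_sub]; simp
  · simp

lemma b_zero : b 0 = a 1 := by
  funext z
  show 6 * (z V.p1) ^ 2 + z V.y = Yhat (fun z => z V.q1) z
  simp [Yhat, pd_coord]

lemma b_eq_a (k : ℕ) : b k = a (k + 1) := by
  induction k with
  | zero => exact b_zero
  | succ k ih =>
    show Yhat (b k) = Yhat (a (k+1))
    rw [ih]

lemma Yop_zero (z : V → ℝ) : Yop (fun _ => 0) z = 0 := by
  simp [Yop, pd_const]

lemma Dop_zero (z : V → ℝ) : Dop (fun _ => 0) z = 0 := by
  simp [Dop, pd_const]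

/-- `ω̄_k = Ȳ^k ω̄ = p̄_{k+1} - q̄_k`. -/
lemma iter_wb (k : ℕ) : (Yop^[k] wb) = fun z => z (V.pb (k + 1)) - z (V.qb k) := by
  induction k with
  | zero => rfl
  | succ k ih =>
    rw [Function.iterate_succ_apply', ih]
    funext z
    unfold Yop
    simp only [pd_pair]
    have hpd : (fun i : ℕ => z (V.pb (i + 1)) *
          ((if V.pb (k+1) = V.pb i then (1:ℝ) else 0) - (if V.qb k = V.pb i then 1 else 0)) +
        z (V.qb (i + 1)) *
          ((if V.pb (k+1) = V.qb i then (1:ℝ) else 0) - (if V.qb k = V.qb i then 1 else 0)))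
        = fun i : ℕ => (if i = k + 1 then z (V.pb (i+1)) else 0)
            - (if i = k then z (V.qb (i+1)) else 0) := by
      funext i
      rcases eq_or_ne i (k+1) with h1 | h1 <;> rcases eq_or_ne i k with h2 | h2 <;>
        simp_all <;> first | omega | (try simp [Ne.symm h1, Ne.symm h2]) <;> ring
    rw [hpd]
    rw [tsum_eq_sum (s := Finset.range (k + 2))
      (by intro i hi; simp only [Finset.mem_range] at hi; push_neg at hi
          have h1 : i ≠ k + 1 := by omega
          have h2 : i ≠ k := by omega
          simp [h1, h2])]
    rw [Finset.sum_sub_distrib]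
    rw [Finset.sum_ite_eq' (Finset.range (k+2)) (k+1), Finset.sum_ite_eq' (Finset.range (k+2)) k]
    simp [pd_pair]
    try ring

/-- The vector of arguments `(y, ω̄, ω̄₁, …, ω̄_{m-1})` as functions of the jet variables. -/
noncomputable def Fv (m : ℕ) (z : V → ℝ) : Fin (m + 1) → ℝ :=
  Fin.cons (z V.y) (fun k : Fin m => z (V.pb (k + 1)) - z (V.qb k))

/-- Direction vector: derivative of `Fv m` in the coordinate direction `i`. -/
noncomputable def dF (m : ℕ) : V → (Fin (m + 1) → ℝ)
  | V.y => Pi.single 0 1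
  | V.pb l => if h : 1 ≤ l ∧ l ≤ m then Pi.single ⟨l, by omega⟩ 1 else 0
  | V.qb k => if h : k + 1 ≤ m then -Pi.single ⟨k + 1, by omega⟩ 1 else 0
  | _ => 0

lemma single_mk (m l : ℕ) (hl : l < m + 1) (j : Fin (m + 1)) :
    (Pi.single (M := fun _ : Fin (m + 1) => ℝ) ⟨l, hl⟩ 1) j = if (j : ℕ) = l then 1 else 0 := by
  simp [Pi.single_apply, Fin.ext_iff]

lemma Fv_update (m : ℕ) (z : V → ℝ) (i : V) (t : ℝ) :
    Fv m (Function.update z i t) = Fv m z + (t - z i) • dF m i := by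
  funext j
  simp only [Pi.add_apply, Pi.smul_apply, smul_eq_mul]
  refine Fin.cases ?_ (fun k => ?_) j
  · -- j = 0
    simp only [Fv, Fin.cons_zero]
    cases i with
    | y => simp [dF, Pi.single_apply]
    | x => simp [dF, Function.update_apply]
    | p1 => simp [dF, Function.update_apply]
    | q1 => simp [dF, Function.update_apply]
    | pb l =>
      rw [Function.update_of_ne (by simp)]
      by_cases hc : 1 ≤ l ∧ l ≤ m
      · rw [dF, dif_pos hc, single_mk]
        have : ¬(((0 : Fin (m+1)) : ℕ) = l) := by simp; omega
        rw [if_neg this]; ring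
      · rw [dF, dif_neg hc]; simp
    | qb l =>
      rw [Function.update_of_ne (by simp)]
      by_cases hc : l + 1 ≤ m
      · rw [dF, dif_pos hc]
        simp only [Pi.neg_apply, single_mk]
        have : ¬(((0 : Fin (m+1)) : ℕ) = l + 1) := by simp
        rw [if_neg this]; ring
      · rw [dF, dif_neg hc]; simp
  · -- j = succ k
    have hk := k.isLt
    simp only [Fv, Fin.cons_succ]
    have hsk : ((Fin.succ k : Fin (m+1)) : ℕ) = (k : ℕ) + 1 := rfl
    cases i with
    | y =>
      rw [Function.update_of_ne (by simp), Function.update_of_ne (by simp)]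
      have : (Pi.single (M := fun _ : Fin (m+1) => ℝ) 0 1) (Fin.succ k) = 0 := by
        rw [show (0 : Fin (m+1)) = ⟨0, by omega⟩ from rfl, single_mk]
        simp [Fin.val_succ]
      simp [dF, this]
    | x => simp [dF, Function.update_apply]
    | p1 => simp [dF, Function.update_apply]
    | q1 => simp [dF, Function.update_apply]
    | pb l =>
      have h1 : Function.update z (V.pb l) t (V.qb (k : ℕ)) = z (V.qb (k : ℕ)) :=
        Function.update_of_ne (by simp) _ _
      have h2 : Function.update z (V.pb l) t (V.pb ((k : ℕ) + 1))
          = if (k : ℕ) + 1 = l then t else z (V.pb ((k : ℕ) + 1)) := by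
        rw [Function.update_apply]
        simp only [V.pb.injEq]
      rw [h1, h2]
      by_cases hc : 1 ≤ l ∧ l ≤ m
      · rw [dF, dif_pos hc, single_mk, hsk]
        by_cases he : (k : ℕ) + 1 = l
        · rw [if_pos he, if_pos he, he]; ring
        · rw [if_neg he, if_neg he]; ring
      · have he : ¬((k : ℕ) + 1 = l) := by omega
        rw [dF, dif_neg hc, if_neg he]
        simp
    | qb l =>
      have h1 : Function.update z (V.qb l) t (V.pb ((k : ℕ) + 1)) = z (V.pb ((k : ℕ) + 1)) :=
        Function.update_of_ne (by simp) _ _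
      have h2 : Function.update z (V.qb l) t (V.qb (k : ℕ))
          = if (k : ℕ) = l then t else z (V.qb (k : ℕ)) := by
        rw [Function.update_apply]
        simp only [V.qb.injEq]
      rw [h1, h2]
      by_cases hc : l + 1 ≤ m
      · rw [dF, dif_pos hc]
        simp only [Pi.neg_apply, single_mk, hsk]
        by_cases he : (k : ℕ) = l
        · rw [if_pos he, if_pos (by omega), he]; ring
        · rw [if_neg he, if_neg (by omega)]; ring
      · have he : ¬((k : ℕ) = l) := by omega
        rw [dF, dif_neg hc, if_neg he]
        simp


/-- Chain rule: partial of `g ∘ Fv m` is the fderiv of `g` in direction `dF m i`. -/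
lemma pd_comp (m : ℕ) (g : (Fin (m + 1) → ℝ) → ℝ) (hg : Differentiable ℝ g)
    (i : V) (z : V → ℝ) :
    pd i (fun z => g (Fv m z)) z = fderiv ℝ g (Fv m z) (dF m i) := by
  unfold pd
  simp only [Fv_update]
  have h1 : HasDerivAt (fun t : ℝ => Fv m z + (t - z i) • dF m i) (dF m i) (z i) := by
    simpa using (((hasDerivAt_id (z i)).sub_const (z i)).smul_const (dF m i)).const_add (Fv m z)
  have h2 : HasFDerivAt g (fderiv ℝ g (Fv m z)) (Fv m z + ((z i) - z i) • dF m i) := by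
    simpa using (hg (Fv m z)).hasFDerivAt
  exact (h2.comp_hasDerivAt (z i) h1).deriv

/-- Evaluation of a linear functional on the direction vectors. -/
noncomputable def sL (m : ℕ) (L : (Fin (m + 1) → ℝ) →L[ℝ] ℝ) (j : ℕ) : ℝ :=
  if h : 1 ≤ j ∧ j ≤ m then L (Pi.single ⟨j, by omega⟩ 1) else 0

lemma L_dF_x (m : ℕ) (L : (Fin (m + 1) → ℝ) →L[ℝ] ℝ) : L (dF m V.x) = 0 := by
  simp [dF]
lemma L_dF_p1 (m : ℕ) (L : (Fin (m + 1) → ℝ) →L[ℝ] ℝ) : L (dF m V.p1) = 0 := by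
  simp [dF]
lemma L_dF_q1 (m : ℕ) (L : (Fin (m + 1) → ℝ) →L[ℝ] ℝ) : L (dF m V.q1) = 0 := by
  simp [dF]
lemma L_dF_y (m : ℕ) (L : (Fin (m + 1) → ℝ) →L[ℝ] ℝ) :
    L (dF m V.y) = L (Pi.single 0 1) := rfl
lemma L_dF_pb (m : ℕ) (L : (Fin (m + 1) → ℝ) →L[ℝ] ℝ) (l : ℕ) :
    L (dF m (V.pb l)) = sL m L l := by
  have hd : dF m (V.pb l) = if h : 1 ≤ l ∧ l ≤ m then Pi.single ⟨l, by omega⟩ 1 else 0 := rfl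
  rw [hd]
  unfold sL
  by_cases hc : 1 ≤ l ∧ l ≤ m
  · rw [dif_pos hc, dif_pos hc]
  · rw [dif_neg hc, dif_neg hc, map_zero]
lemma L_dF_qb (m : ℕ) (L : (Fin (m + 1) → ℝ) →L[ℝ] ℝ) (l : ℕ) :
    L (dF m (V.qb l)) = -sL m L (l + 1) := by
  have hd : dF m (V.qb l) = if h : l + 1 ≤ m then -Pi.single ⟨l + 1, by omega⟩ 1 else 0 := rfl
  rw [hd]
  unfold sL
  by_cases hc : l + 1 ≤ m
  · rw [dif_pos hc, dif_pos (by omega : 1 ≤ l + 1 ∧ l + 1 ≤ m), map_neg]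
  · rw [dif_neg hc, dif_neg (by omega), map_zero, neg_zero]

lemma sL_zero (m : ℕ) (L : (Fin (m + 1) → ℝ) →L[ℝ] ℝ) {j : ℕ} (hj : j = 0 ∨ m < j) :
    sL m L j = 0 := by
  unfold sL
  rw [dif_neg (by omega)]

/-- Main lemma: any smooth function of `y, ω̄, …, ω̄_{m-1}` is annihilated by `D`. -/
lemma Dop_comp (m : ℕ) (g : (Fin (m + 1) → ℝ) → ℝ) (hg : Differentiable ℝ g)
    (z : V → ℝ) : Dop (fun z => g (Fv m z)) z = 0 := by
  unfold Dop
  set L := fderiv ℝ g (Fv m z) with hL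
  have hpd : ∀ i : V, pd i (fun z => g (Fv m z)) z = L (dF m i) := fun i => pd_comp m g hg i z
  rw [hpd, hpd, hpd]
  rw [tsum_congr (fun i => by rw [hpd, hpd])]
  rw [L_dF_x, L_dF_pb, L_dF_qb]
  rw [tsum_congr (fun i => by rw [L_dF_pb, L_dF_qb])]
  rw [tsum_eq_sum (s := Finset.range m) (by
    intro i hi
    simp only [Finset.mem_range] at hi
    push_neg at hi
    rw [sL_zero m L (by omega), sL_zero m L (by omega)]
    ring)]
  have : ∀ i ∈ Finset.range m,
      a i z * sL m L (i + 1) + b i z * -sL m L (i + 1 + 1)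
      = (fun i => a i z * sL m L (i + 1)) i - (fun i => a i z * sL m L (i + 1)) (i + 1) := by
    intro i _
    simp only [b_eq_a]
    ring
  rw [Finset.sum_congr rfl this, Finset.sum_range_sub']
  rw [sL_zero m L (Or.inr (by omega) : m + 1 = 0 ∨ m < m + 1),
    sL_zero m L (Or.inl rfl : (0:ℕ) = 0 ∨ m < 0)]
  show 0 + z V.p1 * 0 + z V.q1 * -sL m L (0 + 1) + (z V.q1 * sL m L (0 + 1) - a m z * 0) = 0
  ring

lemma Fv_castSucc (m : ℕ) (z : V → ℝ) :
    (fun j : Fin (m + 1) => Fv (m + 1) z j.castSucc) = Fv m z := by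
  funext j
  refine Fin.cases ?_ (fun k => ?_) j
  · simp [Fv]
  · have h1 : (Fin.succ k).castSucc = Fin.succ (Fin.castSucc k) := rfl
    rw [h1]
    simp only [Fv, Fin.cons_succ]
    rfl

/-- Formula for `Ȳ` applied to a function of `y, ω̄, …, ω̄_{m-1}`. -/
lemma Yop_comp (m : ℕ) (g : (Fin (m + 1) → ℝ) → ℝ) (hg : Differentiable ℝ g) (z : V → ℝ) :
    Yop (fun z => g (Fv m z)) z
      = fderiv ℝ g (Fv m z) (Pi.single 0 1)
        + ∑ i ∈ Finset.range (m + 1),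
            (z (V.pb (i + 1)) - z (V.qb i)) * sL m (fderiv ℝ g (Fv m z)) i := by
  unfold Yop
  set L := fderiv ℝ g (Fv m z) with hL
  have hpd : ∀ i : V, pd i (fun z => g (Fv m z)) z = L (dF m i) := fun i => pd_comp m g hg i z
  rw [hpd, hpd, hpd]
  rw [tsum_congr (fun i => by rw [hpd, hpd, L_dF_pb, L_dF_qb])]
  rw [L_dF_y, L_dF_p1, L_dF_q1]
  rw [tsum_eq_sum (s := Finset.range (m + 1)) (by
    intro i hi
    simp only [Finset.mem_range] at hi
    push_neg at hi
    rw [sL_zero m L (by omega), sL_zero m L (by omega)]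
    ring)]
  have key : ∑ i ∈ Finset.range (m + 1), z (V.qb (i + 1)) * sL m L (i + 1)
      = ∑ i ∈ Finset.range (m + 1), z (V.qb i) * sL m L i := by
    have h2 := Finset.sum_range_succ' (fun i => z (V.qb i) * sL m L i) (m + 1)
    have h3 := Finset.sum_range_succ (fun i => z (V.qb i) * sL m L i) (m + 1)
    rw [sL_zero m L (Or.inl rfl)] at h2
    rw [sL_zero m L (Or.inr (by omega))] at h3
    rw [h3] at h2
    linarith
  have hsummand : ∀ i ∈ Finset.range (m + 1),
      z (V.pb (i + 1)) * sL m L i + z (V.qb (i + 1)) * -sL m L (i + 1)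
      = z (V.pb (i + 1)) * sL m L i - z (V.qb (i + 1)) * sL m L (i + 1) := by
    intro i _; ring
  rw [Finset.sum_congr rfl hsummand, Finset.sum_sub_distrib, key, ← Finset.sum_sub_distrib]
  have : ∀ i ∈ Finset.range (m + 1),
      z (V.pb (i + 1)) * sL m L i - z (V.qb i) * sL m L i
      = (z (V.pb (i + 1)) - z (V.qb i)) * sL m L i := by
    intro i _; ring
  rw [Finset.sum_congr rfl this]
  ring


/-- For any smooth function `h(y, ω̄, ω̄₁, …, ω̄_{n−1})`, the pair
`φ = h(y, ω̄, Ȳω̄, …, Ȳ^{n−1}ω̄)`, `ψ = 0` is a symmetry of `p_{xy} = q_x`, `q_{xy} = 6p1² + y`: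
the defining equations `D D̄ φ = D ψ`, `D D̄ ψ = 12 p1 D φ` hold, and in particular `D φ = 0`. -/
theorem stmt11 (n : ℕ) (h : (Fin (n + 1) → ℝ) → ℝ) (hs : ContDiff ℝ (⊤ : ℕ∞) h)
    (φ ψ : (V → ℝ) → ℝ)
    (hφ : φ = fun z => h (Fin.cons (z V.y) (fun k : Fin n => (Yop^[(k : ℕ)] wb) z)))
    (hψ : ψ = fun _ => 0) :
    (∀ z, Dop φ z = 0) ∧
    (∀ z, Dop (Yop φ) z = Dop ψ z) ∧
    (∀ z, Dop (Yop ψ) z = 12 * z V.p1 * Dop φ z) := by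
  have hdh : Differentiable ℝ h := hs.differentiable (by simp)
  have hφ' : φ = fun z => h (Fv n z) := by
    rw [hφ]; funext z; congr 1; funext j
    refine Fin.cases ?_ (fun k => ?_) j
    · simp [Fv]
    · simp only [Fin.cons_succ, Fv, iter_wb]
  have part1 : ∀ z, Dop φ z = 0 := by
    intro z; rw [hφ']; exact Dop_comp n h hdh z
  refine ⟨part1, ?_, ?_⟩
  · -- D D̄ φ = D ψ
    intro z
    have hDψ : Dop ψ z = 0 := by rw [hψ]; exact Dop_zero z
    rw [hDψ]
    set g' : (Fin (n + 2) → ℝ) → ℝ := fun w =>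
      (fderiv ℝ h (fun j : Fin (n + 1) => w j.castSucc)) (Pi.single 0 1) +
        ∑ j : Fin (n + 1), w j.succ *
          (if 1 ≤ (j : ℕ) then
            (fderiv ℝ h (fun j' : Fin (n + 1) => w j'.castSucc)) (Pi.single j 1) else 0)
      with hg'def
    have hP : Differentiable ℝ
        (fun w : Fin (n + 2) → ℝ => (fun j : Fin (n + 1) => w j.castSucc)) := by
      rw [differentiable_pi]
      intro j
      exact (ContinuousLinearMap.proj j.castSucc : (Fin (n + 2) → ℝ) →L[ℝ] ℝ).differentiable
    have hfd : Differentiable ℝ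
        (fun w : Fin (n + 2) → ℝ => fderiv ℝ h (fun j : Fin (n + 1) => w j.castSucc)) :=
      ((hs.fderiv_right (m := 1) (WithTop.coe_le_coe.mpr le_top)).differentiable one_ne_zero).comp hP
    have hg'd : Differentiable ℝ g' := by
      rw [hg'def]
      apply Differentiable.add
      · exact (ContinuousLinearMap.apply ℝ ℝ
          (Pi.single 0 1 : Fin (n + 1) → ℝ)).differentiable.comp hfd
      · apply Differentiable.fun_sum
        intro j _
        apply Differentiable.mul
        · exact (ContinuousLinearMap.proj j.succ : (Fin (n + 2) → ℝ) →L[ℝ] ℝ).differentiable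
        · by_cases hj : 1 ≤ (j : ℕ)
          · simp only [hj, if_true]
            exact (ContinuousLinearMap.apply ℝ ℝ
              (Pi.single j 1 : Fin (n + 1) → ℝ)).differentiable.comp hfd
          · simp only [hj, if_false]
            exact differentiable_const 0
    have hYφ : Yop φ = fun z => g' (Fv (n + 1) z) := by
      rw [hφ']
      funext z'
      rw [Yop_comp n h hdh z']
      simp only [hg'def]
      rw [Fv_castSucc n z']
      congr 1
      have hterm : ∀ j : Fin (n + 1),
          Fv (n + 1) z' j.succ *
            (if 1 ≤ (j : ℕ) then (fderiv ℝ h (Fv n z')) (Pi.single j 1) else 0)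
          = (fun i : ℕ => (z' (V.pb (i + 1)) - z' (V.qb i)) *
              sL n (fderiv ℝ h (Fv n z')) i) (j : ℕ) := by
        intro j
        have h1 : Fv (n + 1) z' j.succ = z' (V.pb ((j : ℕ) + 1)) - z' (V.qb (j : ℕ)) := by
          simp [Fv]
        have h2 : (if 1 ≤ (j : ℕ) then (fderiv ℝ h (Fv n z')) (Pi.single j 1) else 0)
            = sL n (fderiv ℝ h (Fv n z')) (j : ℕ) := by
          unfold sL
          by_cases hj : 1 ≤ (j : ℕ)
          · rw [if_pos hj, dif_pos ⟨hj, by omega⟩]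
          · rw [if_neg hj, dif_neg (by omega)]
        rw [h1, h2]
      rw [Finset.sum_congr rfl (fun j _ => hterm j)]
      exact (Fin.sum_univ_eq_sum_range _ _).symm
    rw [hYφ]
    exact Dop_comp (n + 1) g' hg'd z
  · -- D D̄ ψ = 12 p1 D φ
    intro z
    have h1 : Yop ψ = fun _ => 0 := by rw [hψ]; funext z'; exact Yop_zero z'
    rw [h1, Dop_zero z, part1 z]
    ring
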